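/- arXiv:2107.09233 — 7 statements merged into one kernel-verified Lean document; each statement's English description precedes it below -/
import Mathlib

section
/- A k-uniform hypergraph on n vertices with at most β·n^k/k! edges contains at most β^((k+1)/k)·n^(k+1)/(k+1)! simplices, where a simplex is a set of k+1 vertices all of whose k-element subsets are edges. -/
/-!
Order the vertices of every simplex and of every edge: a simplex yields `(k+1)!` injective
`(k+1)`-tuples, an edge `k!` injective `k`-tuples, and deleting any coordinate of an ordered
simplex leaves an ordered edge. The discrete Loomis–Whitney inequality
`#A ^ k ≤ ∏ i, #(π_i A)` for `A ⊆ V^(k+1)`, with `π_i` deleting the `i`-th coordinate, therefore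
gives `((k+1)! t)^k ≤ (k! e)^(k+1)` for `t` simplices and `e` edges, which rearranges to the
bound. Loomis–Whitney is proved by slicing `A` along its last coordinate, applying induction to
each slice and recombining the slices with Hölder's inequality.
-/

open Finset MeasureTheory

theorem Finset.sum_prod_rpow_le_prod_sum_rpow {ι α : Type*} (s : Finset α) (t : Finset ι)
    {f : ι → α → ℝ} (hf : ∀ i ∈ t, ∀ x ∈ s, 0 ≤ f i x) {p : ι → ℝ}
    (hp : ∑ i ∈ t, p i = 1) (hp₀ : ∀ i ∈ t, 0 ≤ p i) :
    ∑ x ∈ s, ∏ i ∈ t, f i x ^ p i ≤ ∏ i ∈ t, (∑ x ∈ s, f i x) ^ p i := by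
  let _ : MeasurableSpace α := ⊤
  have h := ENNReal.lintegral_prod_norm_pow_le (μ := Measure.count.restrict ↑s) t
    (f := fun i x => ENNReal.ofReal (f i x)) (fun _ _ => measurable_from_top.aemeasurable) hp hp₀
  simp only [lintegral_finset, Measure.count_singleton, mul_one] at h
  have hsum : ∀ i ∈ t, 0 ≤ ∑ x ∈ s, f i x := fun i hi => sum_nonneg (hf i hi)
  rw [← ENNReal.ofReal_le_ofReal_iff (prod_nonneg fun i hi => Real.rpow_nonneg (hsum i hi) _),
    ENNReal.ofReal_sum_of_nonneg fun x hx =>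
      prod_nonneg fun i hi => Real.rpow_nonneg (hf i hi x hx) _,
    ENNReal.ofReal_prod_of_nonneg fun i hi => Real.rpow_nonneg (hsum i hi) _]
  convert h using 2 with x hx i hi i hi
  · rw [ENNReal.ofReal_prod_of_nonneg fun i hi => Real.rpow_nonneg (hf i hi x hx) _]
    exact prod_congr rfl fun i hi =>
      (ENNReal.ofReal_rpow_of_nonneg (hf i hi x hx) (hp₀ i hi)).symm
  · rw [← ENNReal.ofReal_rpow_of_nonneg (hsum i hi) (hp₀ i hi),
      ENNReal.ofReal_sum_of_nonneg (hf i hi)]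

theorem Finset.sum_pow_le_mul_prod_sum {α : Type*} {s : Finset α} {r : ℕ} (hr : r ≠ 0)
    {a : α → ℝ} {b : Fin r → α → ℝ} {D : ℝ} (ha : ∀ x ∈ s, 0 ≤ a x)
    (hb : ∀ i, ∀ x ∈ s, 0 ≤ b i x) (hD : 0 ≤ D) (h : ∀ x ∈ s, a x ^ r ≤ D * ∏ i, b i x) :
    (∑ x ∈ s, a x) ^ r ≤ D * ∏ i, ∑ x ∈ s, b i x := by
  have le_rpow_inv_iff {u v : ℝ} (hu : 0 ≤ u) (hv : 0 ≤ v) : u ≤ v ^ (r⁻¹ : ℝ) ↔ u ^ r ≤ v := by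
    rw [Real.le_rpow_inv_iff_of_pos hu hv (by positivity), Real.rpow_natCast]
  have hbsum i : 0 ≤ ∑ x ∈ s, b i x := sum_nonneg (hb i)
  rw [← le_rpow_inv_iff (sum_nonneg ha) (mul_nonneg hD (prod_nonneg fun i _ => hbsum i)),
    Real.mul_rpow hD (prod_nonneg fun i _ => hbsum i),
    ← Real.finsetProd_rpow _ _ fun i _ => hbsum i]
  calc ∑ x ∈ s, a x ≤ ∑ x ∈ s, D ^ (r⁻¹ : ℝ) * ∏ i, b i x ^ (r⁻¹ : ℝ) := by
        refine sum_le_sum fun x hx => ?_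
        rw [Real.finsetProd_rpow _ _ fun i _ => hb i x hx,
          ← Real.mul_rpow hD (prod_nonneg fun i _ => hb i x hx),
          le_rpow_inv_iff (ha x hx) (mul_nonneg hD (prod_nonneg fun i _ => hb i x hx))]
        exact h x hx
    _ ≤ D ^ (r⁻¹ : ℝ) * ∏ i, (∑ x ∈ s, b i x) ^ (r⁻¹ : ℝ) := by
        rw [← mul_sum]
        refine mul_le_mul_of_nonneg_left ?_ (Real.rpow_nonneg hD _)
        refine sum_prod_rpow_le_prod_sum_rpow s univ (fun i _ => hb i) ?_ fun _ _ => by positivity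
        rw [sum_const, card_univ, Fintype.card_fin, nsmul_eq_mul, mul_inv_cancel₀ (by positivity)]

section LoomisWhitney

variable {V : Type*} {d : ℕ}

lemma Fin.removeNth_removeNth_last (i : Fin (d + 1)) (f : Fin (d + 2) → V) :
    i.removeNth ((Fin.last _).removeNth f) = (Fin.last _).removeNth (i.castSucc.removeNth f) := by
  ext j
  simp [Fin.removeNth]

lemma Fin.removeNth_castSucc_apply_last (i : Fin (d + 1)) (f : Fin (d + 2) → V) :
    i.castSucc.removeNth f (Fin.last d) = f (Fin.last (d + 1)) := by
  simp [Fin.removeNth]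

variable [DecidableEq V]

lemma card_pow_succ_le_of_forall_apply_last_eq
    (ih : ∀ B : Finset (Fin (d + 1) → V), B.Nonempty →
      #B ^ d ≤ ∏ i : Fin (d + 1), #(B.image i.removeNth))
    {S : Finset (Fin (d + 2) → V)} {x : V} (hS : ∀ f ∈ S, f (Fin.last _) = x) :
    #S ^ (d + 1) ≤
      #(S.image (Fin.last _).removeNth) * ∏ i : Fin (d + 1), #(S.image i.castSucc.removeNth) := by
  obtain rfl | hne := S.eq_empty_or_nonempty
  · simp
  set B := S.image (Fin.last _).removeNth
  have hB : #B = #S := by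
    refine card_image_of_injOn fun f hf g hg hfg => ?_
    rw [← Fin.insertNth_self_removeNth (Fin.last _) f,
      ← Fin.insertNth_self_removeNth (Fin.last _) g, hS f hf, hS g hg, hfg]
  calc #S ^ (d + 1) = #B * #B ^ d := by rw [hB, pow_succ']
    _ ≤ #B * ∏ i : Fin (d + 1), #(B.image i.removeNth) := by gcongr; exact ih B (hne.image _)
    _ ≤ _ := by
      gcongr with i
      calc #(B.image i.removeNth)
          = #((S.image i.castSucc.removeNth).image (Fin.last _).removeNth) := by
            simp only [B, image_image, Function.comp_def, Fin.removeNth_removeNth_last]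
        _ ≤ _ := card_image_le

lemma sum_card_image_filter_apply_last_eq (A : Finset (Fin (d + 2) → V)) (i : Fin (d + 1)) :
    ∑ x ∈ A.image (· (Fin.last _)),
        #({f ∈ A | f (Fin.last _) = x}.image i.castSucc.removeNth) =
      #(A.image i.castSucc.removeNth) := by
  rw [card_eq_sum_card_fiberwise (f := (· (Fin.last d))) (t := A.image (· (Fin.last _)))]
  · simp only [filter_image, Fin.removeNth_castSucc_apply_last]
  · intro g hg
    obtain ⟨f, hf, rfl⟩ := mem_image.1 hg
    simpa [Fin.removeNth_castSucc_apply_last] using mem_image_of_mem _ hf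

theorem card_pow_le_prod_card_image_removeNth (A : Finset (Fin (d + 1) → V)) (hA : A.Nonempty) :
    #A ^ d ≤ ∏ i : Fin (d + 1), #(A.image i.removeNth) := by
  induction d with
  | zero => simpa using (hA.image (Fin.removeNth 0)).card_pos
  | succ d ih =>
    let fiber (x : V) := {f ∈ A | f (Fin.last _) = x}
    have hslices := sum_pow_le_mul_prod_sum (s := A.image (· (Fin.last _))) d.succ_ne_zero
      (a := fun x => (#(fiber x) : ℝ))
      (b := fun i x => (#((fiber x).image i.castSucc.removeNth) : ℝ))
      (D := #(A.image (Fin.last _).removeNth)) (fun _ _ => Nat.cast_nonneg _)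
      (fun _ _ _ => Nat.cast_nonneg _) (Nat.cast_nonneg _) fun x _ => by
        have hfiber := card_pow_succ_le_of_forall_apply_last_eq ih (S := fiber x) (x := x)
          fun f hf => (mem_filter.1 hf).2
        have hsub : (fiber x).image (Fin.last _).removeNth ⊆ A.image (Fin.last _).removeNth :=
          image_subset_image (filter_subset _ _)
        exact_mod_cast hfiber.trans (Nat.mul_le_mul_right _ (card_le_card hsub))
    simp only [fiber] at hslices
    norm_cast at hslices
    rw [← card_eq_sum_card_image] at hslices
    simp only [sum_card_image_filter_apply_last_eq] at hslices
    rwa [Fin.prod_univ_castSucc, mul_comm]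

theorem card_pow_le_prod_card_image_removeNth_of_ne_zero (hd : d ≠ 0)
    (A : Finset (Fin (d + 1) → V)) : #A ^ d ≤ ∏ i : Fin (d + 1), #(A.image i.removeNth) := by
  obtain rfl | hA := A.eq_empty_or_nonempty
  · simp [zero_pow hd]
  · exact card_pow_le_prod_card_image_removeNth A hA

end LoomisWhitney

section OrderedTuples

variable {V : Type*} [Fintype V] [DecidableEq V]

def orderedTuples (j : ℕ) (F : Finset (Finset V)) : Finset (Fin j → V) :=
  {f | Function.Injective f ∧ univ.image f ∈ F}

lemma card_filter_injective_image_eq {j : ℕ} {S : Finset V} (hS : #S = j) :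
    #{f : Fin j → V | Function.Injective f ∧ univ.image f = S} = j.factorial := by
  have hembed : ({f : Fin j → V | Function.Injective f ∧ univ.image f = S} : Finset _) =
      (univ : Finset (Fin j ↪ S)).image fun e : Fin j ↪ S => Subtype.val ∘ e := by
    ext f
    simp only [mem_filter, mem_univ, true_and, mem_image]
    constructor
    · rintro ⟨hf, rfl⟩
      exact ⟨⟨fun t => ⟨f t, mem_image_of_mem f (mem_univ t)⟩,
        fun a b h => hf (congrArg Subtype.val h)⟩, rfl⟩
    · rintro ⟨e, rfl⟩
      have hinj : Function.Injective (Subtype.val ∘ e) := Subtype.val_injective.comp e.injective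
      refine ⟨hinj, eq_of_subset_of_card_le ?_ ?_⟩
      · simp [image_subset_iff]
      · rw [card_image_of_injective _ hinj, card_univ, Fintype.card_fin, hS]
  rw [hembed, card_image_of_injective _ fun e e' h => by ext t; exact congrFun h t, card_univ,
    Fintype.card_embedding_eq, Fintype.card_fin, Fintype.card_coe, hS, Nat.descFactorial_self]

lemma card_orderedTuples {j : ℕ} {F : Finset (Finset V)} (hF : ∀ S ∈ F, #S = j) :
    #(orderedTuples j F) = #F * j.factorial := by
  rw [card_eq_sum_card_fiberwise (f := fun f => univ.image f) (t := F)
    fun f hf => (mem_filter.1 hf).2.2, ← smul_eq_mul, ← sum_const]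
  refine sum_congr rfl fun S hS => ?_
  rw [← card_filter_injective_image_eq (hF S hS), orderedTuples, filter_filter]
  congr 1
  exact filter_congr fun f _ => ⟨fun ⟨⟨hf, _⟩, h⟩ => ⟨hf, h⟩, fun ⟨hf, h⟩ => ⟨⟨hf, h ▸ hS⟩, h⟩⟩

lemma image_removeNth_orderedTuples_subset {k : ℕ} {F G : Finset (Finset V)}
    (hFG : ∀ S ∈ F, ∀ T ⊆ S, #T = k → T ∈ G) (i : Fin (k + 1)) :
    (orderedTuples (k + 1) F).image i.removeNth ⊆ orderedTuples k G := by
  simp only [subset_iff, mem_image, orderedTuples, mem_filter, mem_univ, true_and]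
  rintro _ ⟨f, ⟨hf, hfF⟩, rfl⟩
  have hinj : Function.Injective (i.removeNth f) := hf.comp i.succAbove_right_injective
  refine ⟨hinj, hFG _ hfF _ ?_ ?_⟩
  · intro v hv
    obtain ⟨t, -, rfl⟩ := mem_image.1 hv
    exact mem_image_of_mem f (mem_univ _)
  · rw [card_image_of_injective _ hinj, card_univ, Fintype.card_fin]

theorem card_mul_factorial_pow_le {k : ℕ} (hk : k ≠ 0) {F G : Finset (Finset V)}
    (hF : ∀ S ∈ F, #S = k + 1) (hG : ∀ T ∈ G, #T = k)
    (hFG : ∀ S ∈ F, ∀ T ⊆ S, #T = k → T ∈ G) :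
    (#F * (k + 1).factorial) ^ k ≤ (#G * k.factorial) ^ (k + 1) := by
  rw [← card_orderedTuples hF, ← card_orderedTuples hG]
  calc #(orderedTuples (k + 1) F) ^ k
      ≤ ∏ i : Fin (k + 1), #((orderedTuples (k + 1) F).image i.removeNth) :=
        card_pow_le_prod_card_image_removeNth_of_ne_zero hk _
    _ ≤ ∏ _i : Fin (k + 1), #(orderedTuples k G) :=
        prod_le_prod' fun i _ => card_le_card (image_removeNth_orderedTuples_subset hFG i)
    _ = #(orderedTuples k G) ^ (k + 1) := by simp

end OrderedTuples

lemma Real.le_rpow_of_pow_le_pow_succ {x y : ℝ} (hx : 0 ≤ x) (hy : 0 ≤ y) {k : ℕ} (hk : k ≠ 0)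
    (h : x ^ k ≤ y ^ (k + 1)) : x ≤ y ^ (((k : ℝ) + 1) / k) :=
  calc x = (x ^ k) ^ (k⁻¹ : ℝ) := (Real.pow_rpow_inv_natCast hx hk).symm
    _ ≤ (y ^ (k + 1)) ^ (k⁻¹ : ℝ) := by gcongr
    _ = y ^ (((k : ℝ) + 1) / k) := by
      rw [← Real.rpow_natCast, ← Real.rpow_mul hy, Nat.cast_succ, div_eq_mul_inv]

theorem stmt_1_general (k n : ℕ) (hk : 1 ≤ k) (V : Type*) [Fintype V] [DecidableEq V]
    (H : Finset (Finset V)) (huni : ∀ e ∈ H, e.card = k)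
    (β : ℝ) (hβ : 0 ≤ β)
    (hH : (H.card : ℝ) ≤ β * (n : ℝ) ^ k / (Nat.factorial k : ℝ)) :
    ({S : Finset V | S.card = k + 1 ∧ ∀ T ⊆ S, T.card = k → T ∈ H}.ncard : ℝ)
      ≤ β ^ (((k : ℝ) + 1) / (k : ℝ)) * (n : ℝ) ^ (k + 1) / (Nat.factorial (k + 1) : ℝ) := by
  have hk₀ : k ≠ 0 := Nat.one_le_iff_ne_zero.1 hk
  set cliques : Finset (Finset V) := {S | #S = k + 1 ∧ ∀ T ⊆ S, #T = k → T ∈ H}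
  have hncard : {S : Finset V | #S = k + 1 ∧ ∀ T ⊆ S, #T = k → T ∈ H}.ncard = #cliques := by
    rw [← Set.ncard_coe_finset]
    simp [cliques]
  have hcount := card_mul_factorial_pow_le hk₀ (F := cliques) (G := H)
    (fun S hS => (mem_filter.1 hS).2.1) huni (fun S hS => (mem_filter.1 hS).2.2)
  have hedges : (#H : ℝ) * k.factorial ≤ β * n ^ k := (le_div_iff₀ (by positivity)).1 hH
  rw [hncard, le_div_iff₀ (by positivity)]
  calc (#cliques : ℝ) * (k + 1).factorial ≤ (β * n ^ k) ^ (((k : ℝ) + 1) / k) := by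
        refine Real.le_rpow_of_pow_le_pow_succ (by positivity) (by positivity) hk₀ ?_
        calc ((#cliques : ℝ) * (k + 1).factorial) ^ k ≤ ((#H : ℝ) * k.factorial) ^ (k + 1) := by
              exact_mod_cast hcount
          _ ≤ (β * n ^ k) ^ (k + 1) := by gcongr
    _ = β ^ (((k : ℝ) + 1) / k) * n ^ (k + 1) := by
      rw [Real.mul_rpow hβ (by positivity), ← Real.rpow_natCast (n : ℝ) k,
        ← Real.rpow_mul (Nat.cast_nonneg n), mul_div_cancel₀ _ (Nat.cast_ne_zero.2 hk₀)]
      norm_cast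

/-- Kruskal–Katona (simplex counting form): a `k`-uniform hypergraph on `n` vertices with at
most `β·n^k/k!` edges contains at most `β^((k+1)/k)·n^(k+1)/(k+1)!` simplices. -/
theorem stmt_1 (k n : ℕ) (hk : 1 ≤ k) (V : Type*) [Fintype V] [DecidableEq V]
    (hV : Fintype.card V = n)
    (H : Finset (Finset V)) (huni : ∀ e ∈ H, e.card = k)
    (β : ℝ) (hβ : 0 ≤ β)
    (hH : (H.card : ℝ) ≤ β * (n : ℝ) ^ k / (Nat.factorial k : ℝ)) :
    ({S : Finset V | S.card = k + 1 ∧ ∀ T ⊆ S, T.card = k → T ∈ H}.ncard : ℝ)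
      ≤ β ^ (((k : ℝ) + 1) / (k : ℝ)) * (n : ℝ) ^ (k + 1) / (Nat.factorial (k + 1) : ℝ) :=
  stmt_1_general k n hk V H huni β hβ hH
end

section
/- There are no real numbers x, y, z, a, b, c satisfying simultaneously: a + b·(3φ−1)/2 + c > 1, a + φ(b+c) > 1, x + y + z = 1, x² + 2xy + 2yz ≥ a+b+c, 2yz ≥ b, and a,b,c,x,y,z ≥ 0, where φ = 1909/1000. -/
/-!
Write `T = x² + 2xy + 2yz`. Since `a + b + c ≤ T`, `b ≤ 2yz` and `φ ≥ 1`, the two strict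
constraints force `1 < φ T` and `1 < T + 3(φ - 1) yz`. Homogenising with `x + y + z = 1`, both
`φ T - (x + y + z)²` and `T + 3(φ - 1) yz - (x + y + z)²` would be positive on the nonnegative
orthant, which for `φ = 1.909` is ruled out by a degree-four Positivstellensatz certificate.
-/

section Reduction

variable {φ x y z a b c : ℝ}

lemma one_lt_mul_of_one_lt_add_mul (hφ : 1 ≤ φ) (ha : 0 ≤ a)
    (hT : a + b + c ≤ x ^ 2 + 2 * x * y + 2 * y * z) (h : 1 < a + φ * (b + c)) :
    1 < φ * (x ^ 2 + 2 * x * y + 2 * y * z) :=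
  calc 1 < a + φ * (b + c) := h
    _ ≤ φ * (a + b + c) := by nlinarith
    _ ≤ φ * (x ^ 2 + 2 * x * y + 2 * y * z) := by gcongr

lemma one_lt_add_mul_of_one_lt_add_mul (hφ : 1 ≤ φ)
    (hT : a + b + c ≤ x ^ 2 + 2 * x * y + 2 * y * z) (hb : b ≤ 2 * y * z)
    (h : 1 < a + b * (3 * φ - 1) / 2 + c) :
    1 < x ^ 2 + 2 * x * y + 2 * y * z + 3 * (φ - 1) * (y * z) :=
  calc 1 < a + b * (3 * φ - 1) / 2 + c := h
    _ = (a + b + c) + 3 * (φ - 1) / 2 * b := by ring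
    _ ≤ x ^ 2 + 2 * x * y + 2 * y * z + 3 * (φ - 1) / 2 * (2 * y * z) := by gcongr
    _ = x ^ 2 + 2 * x * y + 2 * y * z + 3 * (φ - 1) * (y * z) := by ring

end Reduction

lemma not_sq_lt_and_sq_lt {x y z : ℝ} (hx : 0 ≤ x) (hy : 0 ≤ y) (hz : 0 ≤ z) :
    ¬ ((x + y + z) ^ 2 < 1909 / 1000 * (x ^ 2 + 2 * x * y + 2 * y * z) ∧
      (x + y + z) ^ 2 < x ^ 2 + 2 * x * y + 2 * y * z + 3 * (1909 / 1000 - 1) * (y * z)) := by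
  rintro ⟨hA, hB⟩
  rw [← sub_pos] at hA hB
  linarith [mul_pos hA hB,
    mul_nonneg (mul_nonneg hy hy) hA.le,
    mul_nonneg (mul_nonneg hx hz) hA.le,
    mul_nonneg (sq_nonneg (y - 2 * z)) hA.le,
    mul_nonneg (mul_nonneg hy hy) hB.le,
    mul_nonneg (mul_nonneg hx hy) hB.le,
    mul_nonneg (mul_nonneg hx hz) hB.le,
    mul_nonneg (sq_nonneg (x + 2 * y - 3 * z)) hB.le,
    mul_nonneg (sq_nonneg (y - z)) hB.le,
    mul_nonneg (mul_nonneg hx hx) (sq_nonneg (4 * y - 5 * z)),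
    pow_nonneg hz 4,
    mul_nonneg (mul_nonneg hx hx) (sq_nonneg (y - 2 * z)),
    mul_nonneg (mul_nonneg hx hy) (sq_nonneg (3 * y - 4 * z)),
    mul_nonneg (mul_nonneg hx hz) (sq_nonneg (3 * y - 4 * z))]

/-- The key semialgebraic infeasibility with φ = 1909/1000. -/
theorem stmt_3 :
    ¬ ∃ x y z a b c : ℝ,
      a + b * (3 * (1909 / 1000 : ℝ) - 1) / 2 + c > 1 ∧
      a + (1909 / 1000 : ℝ) * (b + c) > 1 ∧
      x + y + z = 1 ∧
      x ^ 2 + 2 * x * y + 2 * y * z ≥ a + b + c ∧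
      2 * y * z ≥ b ∧
      0 ≤ a ∧ 0 ≤ b ∧ 0 ≤ c ∧ 0 ≤ x ∧ 0 ≤ y ∧ 0 ≤ z := by
  rintro ⟨x, y, z, a, b, c, h1, h2, hs, hT, hb, ha, -, -, hx, hy, hz⟩
  have hφ : (1 : ℝ) ≤ 1909 / 1000 := by norm_num
  apply not_sq_lt_and_sq_lt hx hy hz
  rw [hs, one_pow]
  exact ⟨one_lt_mul_of_one_lt_add_mul hφ ha hT h2, one_lt_add_mul_of_one_lt_add_mul hφ hT hb h1⟩
end

section
/- For k ≥ 1, the 2-blowup of a pair of k-clauses on the same set of k variables is non-minimal. Concretely: if C₁ = v₁∧⋯∧v_k and C₂ = ¬v₁∧⋯∧¬v_j∧v_{j+1}∧⋯∧v_k with 1 ≤ j ≤ k, then in the formula on the 2k variables v₁,v₁′,…,v_k,v_k′ consisting of all clauses obtained from C₁ or C₂ by replacing each variable independently by itself or its primed copy, the clause v₁∧⋯∧v_k has no witness (no assignment satisfies it while falsifying all other clauses of the blowup). -/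
/-!
Falsifying every other blowup clause of `v₁∧⋯∧v_k` forces each primed copy `vᵢ′` to be
false: otherwise the clause that uses `vᵢ′` and the unprimed copies elsewhere would be satisfied.
With all unprimed copies true and all primed copies false, every polarity pattern is realised
by some blowup clause, in particular the one of `C₂` that takes primed copies exactly at its
negated literals.
-/

section Blowup

variable {ι : Type*} {w : ι → Bool → Bool}

theorem primed_eq_false_of_forall_other_clause_false [DecidableEq ι]
    (hunprimed : ∀ i, w i false = true)
    (hother : ∀ s : ι → Bool, (∃ i, s i = true) → ∃ i, w i (s i) = false) (i : ι) :
    w i true = false := by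
  obtain ⟨i', hi'⟩ := hother (fun i' => decide (i' = i)) ⟨i, by simp⟩
  by_cases h : i' = i
  · subst h
    simpa using hi'
  · simp [h, hunprimed i'] at hi'

theorem eq_of_select_not (hunprimed : ∀ i, w i false = true)
    (hprimed : ∀ i, w i true = false) (p : ι → Bool) (i : ι) :
    w i (!p i) = p i := by
  cases p i <;> simp [hunprimed, hprimed]

end Blowup

theorem stmt_8_general (k j : ℕ) :
    ¬ ∃ w : Fin k → Bool → Bool,
      -- the chosen clause v₁∧⋯∧v_k (all unprimed copies) is satisfied
      (∀ i : Fin k, w i false = true) ∧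
      -- every other blowup clause of C₁ is falsified
      (∀ s : Fin k → Bool, (∃ i, s i = true) → ∃ i : Fin k, w i (s i) = false) ∧
      -- every blowup clause of C₂ is falsified
      (∀ s : Fin k → Bool,
        ∃ i : Fin k, w i (s i) ≠ (if (i : ℕ) < j then false else true)) := by
  rintro ⟨w, hunprimed, hother, hC₂⟩
  have hprimed := primed_eq_false_of_forall_other_clause_false hunprimed hother
  let p : Fin k → Bool := fun i => if (i : ℕ) < j then false else true
  obtain ⟨i, hi⟩ := hC₂ fun i => !p i
  exact hi (eq_of_select_not hunprimed hprimed p i)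

/-- The 2-blowup of a pair of `k`-clauses on the same variable set is non-minimal: with
`C₁ = v₁∧⋯∧v_k` and `C₂ = ¬v₁∧⋯∧¬v_j∧v_{j+1}∧⋯∧v_k` (`1 ≤ j ≤ k`), the clause
`v₁∧⋯∧v_k` has no witness in the blowup. Here `w i b` is the value of the copy `b` of
variable `i`, and a blowup clause is specified by a copy-selector `s : Fin k → Bool`. -/
theorem stmt_8 (k j : ℕ) (hj1 : 1 ≤ j) (hjk : j ≤ k) :
    ¬ ∃ w : Fin k → Bool → Bool,
      -- the chosen clause v₁∧⋯∧v_k (all unprimed copies) is satisfied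
      (∀ i : Fin k, w i false = true) ∧
      -- every other blowup clause of C₁ is falsified
      (∀ s : Fin k → Bool, (∃ i, s i = true) → ∃ i : Fin k, w i (s i) = false) ∧
      -- every blowup clause of C₂ is falsified
      (∀ s : Fin k → Bool,
        ∃ i : Fin k, w i (s i) ≠ (if (i : ℕ) < j then false else true)) :=
  stmt_8_general k j
end

section
/- Let H′ be the 3-clause k-SAT formula with clauses C₁ = v₂∧v₃∧⋯∧v_{k+1}, C₂ containing the positive literal v₁ together with literals on variables v₂,…,v_k (of arbitrary polarity), and C₃ containing the negative literal ¬v₁ together with literals on variables v₂,…,v_{k−1},v_{k+1} (of arbitrary polarity). Then the 2-blowup H′[2] is non-minimal: no assignment satisfies the clause v₂∧v₃∧⋯∧v_{k+1} of H′[2] while falsifying all other clauses of H′[2]. -/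
/-! Falsifying every other copy of `C₁` forces all primed copies of `v₂,…,v_{k+1}` to be false,
while the unprimed ones are true; so every literal on these variables is true on one of the two
copies. Choosing those copies in `C₂` and `C₃` leaves only the `v₁`-literal free: falsifying the
copies of `C₂` forces `v₁ = false`, falsifying those of `C₃` forces `v₁ = true`. -/

theorem copy_not_eq_of_unique_positive_copy {ι : Type*} [DecidableEq ι] {S : Set ι}
    {w : ι → Bool → Bool} (hsat : ∀ i ∈ S, w i false = true)
    (hfalse : ∀ s : ι → Bool, (∃ i ∈ S, s i = true) → ∃ i ∈ S, w i (s i) = false)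
    {j : ι} (hj : j ∈ S) (c : Bool) : w j (!c) = c := by
  cases c
  · obtain ⟨i, hi, hwi⟩ :=
      hfalse (Function.update (fun _ => false) j true) ⟨j, hj, by simp⟩
    by_cases hij : i = j
    · subst hij
      simpa using hwi
    · rw [Function.update_of_ne hij, hsat i hi] at hwi
      exact Bool.noConfusion hwi
  · exact hsat j hj

theorem exists_selector_eq_polarity {ι : Type*} [DecidableEq ι] {w : ι → Bool → Bool}
    (p : ι) (b : Bool) (pol : ι → Bool) (hw : ∀ i ≠ p, w i (!pol i) = pol i) :
    ∃ s : ι → Bool, s p = b ∧ ∀ i ≠ p, w i (s i) = pol i :=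
  ⟨Function.update (fun i => !pol i) p b, by simp, fun i hi => by
    rw [Function.update_of_ne hi]
    exact hw i hi⟩

/-- The 2-blowup of the 3-clause formula `H'` (with `C₁ = v₂∧⋯∧v_{k+1}`, `C₂` containing the
positive literal `v₁` and literals of polarities `ε` on `v₂,…,v_k`, and `C₃` containing the
negative literal `¬v₁` and literals of polarities `δ` on `v₂,…,v_{k−1},v_{k+1}`) is
non-minimal: no assignment satisfies the clause `v₂∧⋯∧v_{k+1}` of `H'[2]` while falsifying
all other clauses of `H'[2]`.  Variables are indexed by `Fin (k+1)` with index `0`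
corresponding to `v₁` and index `i` to `v_{i+1}`; `w i b` is the value of copy `b` of
variable `i`, and blowup clauses are specified by copy-selectors `s`. -/
theorem stmt_9 (k : ℕ) (hk : 2 ≤ k) (ε δ : Fin (k + 1) → Bool) :
    ¬ ∃ w : Fin (k + 1) → Bool → Bool,
      -- the chosen copy of C₁ (all unprimed copies) is satisfied
      (∀ i : Fin (k + 1), i ≠ 0 → w i false = true) ∧
      -- every other blowup clause of C₁ is falsified
      (∀ s : Fin (k + 1) → Bool, (∃ i : Fin (k + 1), i ≠ 0 ∧ s i = true) →
        ∃ i : Fin (k + 1), i ≠ 0 ∧ w i (s i) = false) ∧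
      -- every blowup clause of C₂ is falsified
      (∀ s : Fin (k + 1) → Bool,
        ¬ (w 0 (s 0) = true ∧
            ∀ i : Fin (k + 1), 1 ≤ (i : ℕ) → (i : ℕ) ≤ k - 1 → w i (s i) = ε i)) ∧
      -- every blowup clause of C₃ is falsified
      (∀ s : Fin (k + 1) → Bool,
        ¬ (w 0 (s 0) = false ∧
            (∀ i : Fin (k + 1), 1 ≤ (i : ℕ) → (i : ℕ) ≤ k - 2 → w i (s i) = δ i) ∧
            w (Fin.last k) (s (Fin.last k)) = δ (Fin.last k))) := by
  rintro ⟨w, hC₁, hC₁', hC₂, hC₃⟩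
  have hlit : ∀ i ≠ 0, ∀ c, w i (!c) = c := fun i hi =>
    copy_not_eq_of_unique_positive_copy (S := {i | i ≠ 0}) hC₁ hC₁' hi
  have hne : ∀ i : Fin (k + 1), 1 ≤ (i : ℕ) → i ≠ 0 := by
    rintro i hi rfl
    simp at hi
  have hlast : Fin.last k ≠ 0 := hne _ (by simp; omega)
  obtain ⟨s, hs0, hs⟩ := exists_selector_eq_polarity 0 false ε fun i hi => hlit i hi _
  obtain ⟨t, ht0, ht⟩ := exists_selector_eq_polarity 0 false δ fun i hi => hlit i hi _
  have hv₁ : w 0 false ≠ true := fun h =>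
    hC₂ s ⟨hs0 ▸ h, fun i hi _ => hs i (hne i hi)⟩
  exact hC₃ t ⟨by simpa [ht0] using hv₁, fun i hi _ => ht i (hne i hi), ht _ hlast⟩
end

section
/- Fix k ≥ 3 and θ > 0. If every (n−1)-vertex T⃗_{k−1}-free partially directed (k−1)-graph H⃗′ satisfies α(H⃗′) + θ·β(H⃗′) ≤ π, then every n-vertex T⃗_k-free partially directed k-graph H⃗ satisfies α(H⃗) + ((k−1)θ+1)/k · β(H⃗) ≤ π, via averaging over vertex links. -/
/-!
The link of a vertex `v` of a `T⃗_k`-free `k`-PDG is a `T⃗_{k-1}`-free `(k-1)`-PDG on the other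
`n - 1` vertices, since a copy of `T⃗_{k-1}` in the link extends by `v` to a copy of `T⃗_k`. Summing
the hypothesis over the `n` links, an undirected edge yields an undirected link edge at each of
its `k` vertices, and a directed edge yields an undirected link edge at its head and a directed
one at each of its other `k - 1` vertices. So
`k·#undirected + #directed + θ·(k-1)·#directed ≤ n·π·C(n-1, k-1) = k·π·C(n, k)`.
-/

/-- A partially directed `k`-graph (k-PDG): a set of undirected edges (finsets of vertices)
together with a set of directed edges (a finset of vertices with a distinguished head). -/
structure PDG (V : Type*) where
  undirected : Finset (Finset V)
  directed : Finset (Finset V × V)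

/-- Well-formedness of a `k`-PDG: all edges have `k` vertices, heads of directed edges lie in
their edge, and no two edges (directed or undirected) use the same `k`-set of vertices. -/
def PDG.IsValid {V : Type*} (H : PDG V) (k : ℕ) : Prop :=
  (∀ e ∈ H.undirected, e.card = k) ∧
  (∀ p ∈ H.directed, p.1.card = k ∧ p.2 ∈ p.1) ∧
  (∀ p ∈ H.directed, p.1 ∉ H.undirected) ∧
  (∀ p ∈ H.directed, ∀ q ∈ H.directed, p.1 = q.1 → p = q)

/-- `S` supports an edge of `H` (directed or undirected); this is the underlying hypergraph,
forgetting directions. -/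
def PDG.HasEdge {V : Type*} (H : PDG V) (S : Finset V) : Prop :=
  S ∈ H.undirected ∨ ∃ v, (S, v) ∈ H.directed

/-- `H` contains the generalized partially directed triangle `T⃗_k` as a subgraph: there are a
`(k−2)`-set `A` and distinct further vertices `a`, `b`, `w` such that `A∪{a,b}` and `A∪{b,w}`
support edges (of any kind, since directions may be forgotten) and `A∪{a,w}` supports an
edge directed at `w`. -/
def PDG.ContainsT {V : Type*} [DecidableEq V] (H : PDG V) (k : ℕ) : Prop :=
  ∃ (A : Finset V) (a b w : V), A.card = k - 2 ∧
    a ∉ A ∧ b ∉ A ∧ w ∉ A ∧ a ≠ b ∧ a ≠ w ∧ b ≠ w ∧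
    H.HasEdge (A ∪ {a, b}) ∧ (A ∪ {a, w}, w) ∈ H.directed ∧ H.HasEdge (A ∪ {b, w})

open Finset

namespace PDG

variable {m k : ℕ}

/-- A left inverse of `v.succAbove`; the value at `v` itself is junk. -/
def succAboveInv (v : Fin (m + 2)) (x : Fin (m + 2)) : Fin (m + 1) :=
  (finSuccEquiv' v x).getD 0

@[simp]
lemma succAboveInv_succAbove (v : Fin (m + 2)) (j : Fin (m + 1)) :
    succAboveInv v (v.succAbove j) = j := by
  simp [succAboveInv]

lemma succAbove_succAboveInv {v x : Fin (m + 2)} (h : x ≠ v) :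
    v.succAbove (succAboveInv v x) = x := by
  obtain ⟨j, rfl⟩ := Fin.exists_succAbove_eq h
  rw [succAboveInv_succAbove]

/-- `e ∖ {v}`, relabelled by `v.succAbove` as a set of vertices of the link of `v`. -/
def linkEdge (v : Fin (m + 2)) (e : Finset (Fin (m + 2))) : Finset (Fin (m + 1)) :=
  {j | v.succAbove j ∈ e}

def liftEdge (v : Fin (m + 2)) (S : Finset (Fin (m + 1))) : Finset (Fin (m + 2)) :=
  insert v (S.image v.succAbove)

variable {v : Fin (m + 2)}

@[simp]
lemma succAbove_mem_liftEdge {S : Finset (Fin (m + 1))} {j : Fin (m + 1)} :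
    v.succAbove j ∈ liftEdge v S ↔ j ∈ S := by
  simp [liftEdge, Fin.succAbove_ne, Fin.succAbove_right_injective.eq_iff]

@[simp]
lemma linkEdge_liftEdge (S : Finset (Fin (m + 1))) : linkEdge v (liftEdge v S) = S := by
  ext j
  simp [linkEdge]

lemma liftEdge_linkEdge {e : Finset (Fin (m + 2))} (hv : v ∈ e) :
    liftEdge v (linkEdge v e) = e := by
  ext x
  by_cases hx : x = v
  · simp [liftEdge, hx, hv]
  · obtain ⟨j, rfl⟩ := Fin.exists_succAbove_eq hx
    simp [linkEdge]

lemma linkEdge_injOn (v : Fin (m + 2)) : Set.InjOn (linkEdge v) {e | v ∈ e} :=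
  fun e he e' he' h => by
    rw [← liftEdge_linkEdge he, ← liftEdge_linkEdge he', h]

lemma card_liftEdge (S : Finset (Fin (m + 1))) : #(liftEdge v S) = #S + 1 := by
  rw [liftEdge, card_insert_of_notMem (by simp [Fin.succAbove_ne]),
    card_image_of_injective _ Fin.succAbove_right_injective]

lemma liftEdge_union_pair (A : Finset (Fin (m + 1))) (x y : Fin (m + 1)) :
    liftEdge v A ∪ {v.succAbove x, v.succAbove y} = liftEdge v (A ∪ {x, y}) := by
  simp only [liftEdge, image_union, image_insert, image_singleton, insert_union]

def link (H : PDG (Fin (m + 2))) (v : Fin (m + 2)) : PDG (Fin (m + 1)) where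
  undirected := {e ∈ H.undirected | v ∈ e}.image (linkEdge v) ∪
    {p ∈ H.directed | p.2 = v}.image (linkEdge v ·.1)
  directed := {p ∈ H.directed | v ∈ p.1 ∧ p.2 ≠ v}.image
    fun p => (linkEdge v p.1, succAboveInv v p.2)

variable {H : PDG (Fin (m + 2))}

lemma IsValid.head_mem (hH : H.IsValid k) {p : Finset (Fin (m + 2)) × Fin (m + 2)}
    (hp : p ∈ H.directed) : p.2 ∈ p.1 :=
  (hH.2.1 p hp).2

lemma mem_link_undirected (hH : H.IsValid k) {S : Finset (Fin (m + 1))} :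
    S ∈ (H.link v).undirected ↔
      liftEdge v S ∈ H.undirected ∨ (liftEdge v S, v) ∈ H.directed := by
  simp only [link, mem_union, mem_image, mem_filter]
  constructor
  · rintro (⟨e, ⟨he, hve⟩, rfl⟩ | ⟨p, ⟨hp, rfl⟩, rfl⟩)
    · rw [liftEdge_linkEdge hve]
      exact Or.inl he
    · rw [liftEdge_linkEdge (hH.head_mem hp)]
      exact Or.inr hp
  · rintro (h | h)
    · exact Or.inl ⟨_, ⟨h, mem_insert_self _ _⟩, linkEdge_liftEdge S⟩
    · exact Or.inr ⟨_, ⟨h, rfl⟩, linkEdge_liftEdge S⟩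

lemma mem_link_directed {S : Finset (Fin (m + 1))} {w : Fin (m + 1)} :
    (S, w) ∈ (H.link v).directed ↔ (liftEdge v S, v.succAbove w) ∈ H.directed := by
  simp only [link, mem_image, mem_filter, Prod.mk_inj]
  constructor
  · rintro ⟨p, ⟨hp, hvp, hpv⟩, rfl, rfl⟩
    rwa [liftEdge_linkEdge hvp, succAbove_succAboveInv hpv]
  · intro h
    exact ⟨_, ⟨h, mem_insert_self _ _, Fin.succAbove_ne v w⟩, linkEdge_liftEdge S,
      succAboveInv_succAbove v w⟩

lemma hasEdge_of_link (hH : H.IsValid k) {S : Finset (Fin (m + 1))}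
    (h : (H.link v).HasEdge S) : H.HasEdge (liftEdge v S) := by
  rcases h with hS | ⟨w, hS⟩
  · rcases (mem_link_undirected hH).1 hS with h | h
    exacts [Or.inl h, Or.inr ⟨v, h⟩]
  · exact Or.inr ⟨_, mem_link_directed.1 hS⟩

lemma IsValid.link (hH : H.IsValid k) (v : Fin (m + 2)) : (H.link v).IsValid (k - 1) := by
  have ⟨hU, hD, hUD, hDD⟩ := hH
  refine ⟨fun S hS => ?_, fun ⟨S, w⟩ hq => ?_, fun ⟨S, w⟩ hq hqU => ?_,
    fun ⟨S, w⟩ hq ⟨S', w'⟩ hq' hSS' => ?_⟩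
  · have hcard : #(liftEdge v S) = k := by
      rcases (mem_link_undirected hH).1 hS with h | h
      exacts [hU _ h, (hD _ h).1]
    rw [card_liftEdge] at hcard
    omega
  · have h : #(liftEdge v S) = k ∧ v.succAbove w ∈ liftEdge v S :=
      hD _ (mem_link_directed.1 hq)
    rw [card_liftEdge, succAbove_mem_liftEdge] at h
    exact ⟨(by omega : #S = k - 1), h.2⟩
  · have hq := mem_link_directed.1 hq
    rcases (mem_link_undirected hH).1 hqU with h | h
    · exact hUD _ hq h
    · exact Fin.succAbove_ne v w (congrArg Prod.snd (hDD _ hq _ h rfl))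
  · obtain rfl : S = S' := hSS'
    have h := hDD _ (mem_link_directed.1 hq) _ (mem_link_directed.1 hq') rfl
    rw [Prod.mk_inj, Fin.succAbove_right_injective.eq_iff] at h
    rw [h.2]

lemma ContainsT.of_link (hk : 3 ≤ k) (hH : H.IsValid k)
    (h : (H.link v).ContainsT (k - 1)) : H.ContainsT k := by
  obtain ⟨A, a, b, w, hA, ha, hb, hw, hab, haw, hbw, hEab, hDaw, hEbw⟩ := h
  have hinj : Function.Injective v.succAbove := Fin.succAbove_right_injective
  refine ⟨liftEdge v A, v.succAbove a, v.succAbove b, v.succAbove w, ?_, by simpa, by simpa,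
    by simpa, hinj.ne hab, hinj.ne haw, hinj.ne hbw, ?_, ?_, ?_⟩
  · rw [card_liftEdge, hA]
    omega
  all_goals rw [liftEdge_union_pair]
  exacts [hasEdge_of_link hH hEab, mem_link_directed.1 hDaw, hasEdge_of_link hH hEbw]

lemma card_link_undirected (hH : H.IsValid k) (v : Fin (m + 2)) :
    #(H.link v).undirected = #{e ∈ H.undirected | v ∈ e} + #{p ∈ H.directed | p.2 = v} := by
  have ⟨_, _, hUD, hDD⟩ := hH
  have hlink : ∀ p ∈ H.directed, p.2 = v → v ∈ p.1 := fun p hp hpv => hpv ▸ hH.head_mem hp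
  rw [link, card_union_of_disjoint, card_image_of_injOn, card_image_of_injOn]
  · intro p hp q hq hpq
    simp only [mem_coe, mem_filter] at hp hq
    exact hDD p hp.1 q hq.1 (linkEdge_injOn v (hlink p hp.1 hp.2) (hlink q hq.1 hq.2) hpq)
  · exact (linkEdge_injOn v).mono fun e he => (mem_filter.1 he).2
  · rw [disjoint_left]
    simp only [mem_image, mem_filter, not_exists, not_and]
    rintro _ ⟨e, ⟨he, hve⟩, rfl⟩ p ⟨hp, hpv⟩ hpe
    exact hUD p hp (linkEdge_injOn v (hlink p hp hpv) hve hpe ▸ he)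

lemma card_link_directed (hH : H.IsValid k) (v : Fin (m + 2)) :
    #(H.link v).directed = #{p ∈ H.directed | v ∈ p.1 ∧ p.2 ≠ v} := by
  rw [link, card_image_of_injOn]
  intro p hp q hq hpq
  simp only [mem_coe, mem_filter] at hp hq
  exact hH.2.2.2 p hp.1 q hq.1 (linkEdge_injOn v hp.2.1 hq.2.1 (Prod.mk_inj.1 hpq).1)

lemma sum_card_link_undirected (hH : H.IsValid k) :
    ∑ v, #(H.link v).undirected = k * #H.undirected + #H.directed := by
  have hdeg : ∑ v, #{e ∈ H.undirected | v ∈ e} = ∑ e ∈ H.undirected, #e := by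
    simpa [bipartiteAbove, bipartiteBelow] using
      sum_card_bipartiteAbove_eq_sum_card_bipartiteBelow (· ∈ ·) (s := univ) (t := H.undirected)
  have hheads : ∑ v, #{p ∈ H.directed | p.2 = v} = #H.directed :=
    (card_eq_sum_card_fiberwise fun p _ => mem_univ p.2).symm
  simp only [card_link_undirected hH, sum_add_distrib, hdeg, hheads,
    sum_congr rfl hH.1, sum_const, smul_eq_mul, mul_comm]

lemma sum_card_link_directed (hH : H.IsValid k) :
    ∑ v, #(H.link v).directed = (k - 1) * #H.directed := calc
  ∑ v, #(H.link v).directed = ∑ v, #{p ∈ H.directed | v ∈ p.1 ∧ p.2 ≠ v} := by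
    simp only [card_link_directed hH]
  _ = ∑ p ∈ H.directed, #{v | v ∈ p.1 ∧ p.2 ≠ v} := by
    simpa only [bipartiteAbove, bipartiteBelow] using
      sum_card_bipartiteAbove_eq_sum_card_bipartiteBelow
        (fun v (p : Finset (Fin (m + 2)) × Fin (m + 2)) => v ∈ p.1 ∧ p.2 ≠ v)
        (s := univ) (t := H.directed)
  _ = ∑ _p ∈ H.directed, (k - 1) := sum_congr rfl fun p hp => by
    have hnonhead : ({v | v ∈ p.1 ∧ p.2 ≠ v} : Finset _) = p.1.erase p.2 := by
      ext
      simp [and_comm, eq_comm]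
    rw [hnonhead, card_erase_of_mem (hH.head_mem hp), (hH.2.1 p hp).1]
  _ = (k - 1) * #H.directed := by rw [sum_const, smul_eq_mul, mul_comm]

end PDG

theorem stmt_10_general (k n : ℕ) (hk : 3 ≤ k) (hn : k ≤ n) (θ π : ℝ)
    (hind : ∀ H' : PDG (Fin (n - 1)), H'.IsValid (k - 1) → ¬ H'.ContainsT (k - 1) →
      (H'.undirected.card : ℝ) + θ * (H'.directed.card : ℝ) ≤ π * ((n - 1).choose (k - 1)))
    (H : PDG (Fin n)) (hval : H.IsValid k) (hfree : ¬ H.ContainsT k) :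
    (H.undirected.card : ℝ) + (((k : ℝ) - 1) * θ + 1) / (k : ℝ) * (H.directed.card : ℝ)
      ≤ π * (n.choose k) := by
  obtain ⟨m, rfl⟩ : ∃ m, n = m + 2 := ⟨n - 2, by omega⟩
  have hlinks : ∀ v, (#(H.link v).undirected : ℝ) + θ * #(H.link v).directed ≤
      π * (m + 1).choose (k - 1) :=
    fun v => hind _ (hval.link v) fun h => hfree (h.of_link hk hval)
  have hsum := sum_le_sum fun v (_ : v ∈ univ) => hlinks v
  rw [sum_add_distrib, ← mul_sum, ← Nat.cast_sum, ← Nat.cast_sum,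
    PDG.sum_card_link_undirected hval, PDG.sum_card_link_directed hval, sum_const, card_univ,
    Fintype.card_fin, nsmul_eq_mul, Nat.cast_mul, Nat.cast_pred (by omega)] at hsum
  have hchoose : ((m + 2 : ℕ) : ℝ) * (m + 1).choose (k - 1) = k * (m + 2).choose k := by
    have h := Nat.add_one_mul_choose_eq (m + 1) (k - 1)
    rw [Nat.sub_add_cancel (by omega)] at h
    exact_mod_cast h.trans (mul_comm _ _)
  have hkpos : (0 : ℝ) < k := by exact_mod_cast (by omega : 0 < k)
  rw [← mul_le_mul_iff_of_pos_left hkpos]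
  calc (k : ℝ) * (#H.undirected + ((k - 1) * θ + 1) / k * #H.directed)
      = k * #H.undirected + #H.directed + θ * ((k - 1) * #H.directed) := by
        field_simp
        ring
    _ ≤ ((m + 2 : ℕ) : ℝ) * (π * (m + 1).choose (k - 1)) := by
        push_cast at hsum ⊢
        linarith
    _ = k * (π * (m + 2).choose k) := by
        rw [mul_left_comm, hchoose, mul_left_comm]

/-- Averaging over vertex links: if every `(n−1)`-vertex `T⃗_{k−1}`-free `(k−1)`-PDG `H'`
satisfies `α(H') + θ·β(H') ≤ π`, then every `n`-vertex `T⃗_k`-free `k`-PDG `H` satisfies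
`α(H) + ((k−1)θ+1)/k · β(H) ≤ π`. (Densities are written out as counts over binomial
coefficients.) -/
theorem stmt_10 (k n : ℕ) (hk : 3 ≤ k) (hn : k ≤ n) (θ π : ℝ) (hθ : 0 < θ)
    (hind : ∀ H' : PDG (Fin (n - 1)), H'.IsValid (k - 1) → ¬ H'.ContainsT (k - 1) →
      (H'.undirected.card : ℝ) + θ * (H'.directed.card : ℝ) ≤ π * ((n - 1).choose (k - 1)))
    (H : PDG (Fin n)) (hval : H.IsValid k) (hfree : ¬ H.ContainsT k) :
    (H.undirected.card : ℝ) + (((k : ℝ) - 1) * θ + 1) / (k : ℝ) * (H.directed.card : ℝ)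
      ≤ π * (n.choose k) :=
  stmt_10_general k n hk hn θ π hind H hval hfree
end

section
/- For every n divisible by k, there exists a T⃗_k-free partially directed k-graph on n vertices consisting only of directed edges, with exactly (n/k)·C((k−1)n/k, k−1) directed edges: partition the vertices into A of size n/k and B of size (k−1)n/k, and take all directed edges with k−1 vertices in B directed towards a vertex of A. -/
/-!
Every edge of the construction meets the head part `A` in exactly its head. In a copy of
`T⃗_k`, the edge `A' ∪ {a, w}` directed at `w` forces `A'` and `a` to lie outside `A`, so the
edge on `A' ∪ {a, b}` has its head at `b`; then `b` and `w` are two distinct vertices of `A`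
in the edge `A' ∪ {b, w}`, which is impossible.
-/

open Finset

namespace PDG

variable {V : Type*} [Fintype V] [DecidableEq V]

def directedTowards (A : Finset V) (r : ℕ) : PDG V where
  undirected := ∅
  directed := (A ×ˢ Aᶜ.powersetCard r).image fun p => (insert p.1 p.2, p.1)

variable {A : Finset V} {r : ℕ}

theorem mem_directed_directedTowards {E : Finset V} {v : V} :
    (E, v) ∈ (directedTowards A r).directed ↔ E ∩ A = {v} ∧ #E = r + 1 := by
  simp only [directedTowards, mem_image, mem_product, mem_powersetCard, Prod.mk.injEq,
    Prod.exists]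
  constructor
  · rintro ⟨a, S, ⟨ha, hS, rfl⟩, rfl, rfl⟩
    have hdisj : Disjoint S A := disjoint_left.2 fun x hx => mem_compl.1 (hS hx)
    refine ⟨?_, card_insert_of_notMem fun h => mem_compl.1 (hS h) ha⟩
    rw [insert_inter_of_mem ha, disjoint_iff_inter_eq_empty.1 hdisj, insert_empty]
  · rintro ⟨hEA, hE⟩
    obtain ⟨hvE, hvA⟩ := mem_inter.1 (hEA ▸ mem_singleton_self v)
    refine ⟨v, E.erase v, ⟨hvA, fun x hx => mem_compl.2 fun hxA => ?_, ?_⟩,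
      insert_erase hvE, rfl⟩
    · exact ne_of_mem_erase hx
        (mem_singleton.1 (hEA ▸ mem_inter.2 ⟨mem_of_mem_erase hx, hxA⟩))
    · rw [card_erase_of_mem hvE, hE, Nat.add_sub_cancel]

theorem head_mem_of_mem_directed_directedTowards {E : Finset V} {v : V}
    (h : (E, v) ∈ (directedTowards A r).directed) : v ∈ E ∧ v ∈ A :=
  mem_inter.1 ((mem_directed_directedTowards.1 h).1 ▸ mem_singleton_self v)

theorem mem_iff_eq_head_of_mem_directed_directedTowards {E : Finset V} {v x : V}
    (h : (E, v) ∈ (directedTowards A r).directed) (hxE : x ∈ E) : x ∈ A ↔ x = v := by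
  rw [← mem_singleton, ← (mem_directed_directedTowards.1 h).1, mem_inter]
  exact ⟨fun hxA => ⟨hxE, hxA⟩, And.right⟩

theorem hasEdge_directedTowards {E : Finset V} :
    (directedTowards A r).HasEdge E ↔ ∃ v, (E, v) ∈ (directedTowards A r).directed := by
  simp [HasEdge, directedTowards]

theorem isValid_directedTowards : (directedTowards A r).IsValid (r + 1) := by
  refine ⟨by simp [directedTowards], fun p hp => ?_, by simp [directedTowards],
    fun p hp q hq hpq => ?_⟩
  · exact ⟨(mem_directed_directedTowards.1 hp).2,
      (head_mem_of_mem_directed_directedTowards hp).1⟩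
  · have hp' := (mem_directed_directedTowards.1 hp).1
    have hq' := (mem_directed_directedTowards.1 hq).1
    rw [hpq, hq', singleton_inj] at hp'
    exact Prod.ext hpq hp'.symm

theorem not_containsT_directedTowards (k : ℕ) : ¬ (directedTowards A r).ContainsT k := by
  rintro ⟨A', a, b, w, -, -, -, hwA', -, haw, hbw, habE, hawd, hbwE⟩
  obtain ⟨v, habd⟩ := hasEdge_directedTowards.1 habE
  obtain ⟨u, hbwd⟩ := hasEdge_directedTowards.1 hbwE
  have hA' : ∀ x ∈ A', x ∉ A := fun x hx hxA =>
    hwA' ((mem_iff_eq_head_of_mem_directed_directedTowards hawd (by simp [hx])).1 hxA ▸ hx)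
  have ha : a ∉ A := fun haA =>
    haw ((mem_iff_eq_head_of_mem_directed_directedTowards hawd (by simp)).1 haA)
  have hb : b ∈ A := by
    obtain ⟨hvE, hvA⟩ := head_mem_of_mem_directed_directedTowards habd
    rw [mem_union, mem_insert, mem_singleton] at hvE
    rcases hvE with hv | rfl | rfl
    · exact absurd hvA (hA' v hv)
    · exact absurd hvA ha
    · exact hvA
  have hw : w ∈ A := (head_mem_of_mem_directed_directedTowards hawd).2
  exact hbw <| ((mem_iff_eq_head_of_mem_directed_directedTowards hbwd (by simp)).1 hb).trans
    ((mem_iff_eq_head_of_mem_directed_directedTowards hbwd (by simp)).1 hw).symm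

theorem card_directed_directedTowards :
    #(directedTowards A r).directed = #A * (#Aᶜ).choose r := by
  rw [directedTowards, card_image_of_injOn, card_product, card_powersetCard]
  rintro ⟨a, S⟩ h ⟨a', S'⟩ h' heq
  simp only [coe_product, Set.mem_prod, mem_coe, mem_powersetCard, Prod.mk.injEq] at h h' heq
  obtain ⟨hE, rfl⟩ := heq
  have hS : a ∉ S := fun ha => mem_compl.1 (h.2.1 ha) h.1
  have hS' : a ∉ S' := fun ha => mem_compl.1 (h'.2.1 ha) h.1
  rw [← erase_insert hS, hE, erase_insert hS']

end PDG

/-- For `k ∣ n` there is a `T⃗_k`-free `k`-PDG on `n` vertices consisting only of directed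
edges, with exactly `(n/k)·C((k−1)n/k, k−1)` directed edges (all edges have `k−1` vertices
in a part `B` of size `(k−1)n/k` and are directed towards a vertex of a part `A` of size
`n/k`). -/
theorem stmt_12 (k n : ℕ) (hk : 2 ≤ k) (hdiv : k ∣ n) :
    ∃ H : PDG (Fin n), H.IsValid k ∧ ¬ H.ContainsT k ∧ H.undirected = ∅ ∧
      H.directed.card = (n / k) * Nat.choose ((k - 1) * n / k) (k - 1) := by
  obtain ⟨m, rfl⟩ := hdiv
  obtain ⟨r, rfl⟩ : ∃ r, k = r + 1 := ⟨k - 1, by omega⟩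
  let A : Finset (Fin ((r + 1) * m)) := {v | v < m}
  have hA : #A = m := by
    rw [Fin.card_filter_val_lt]
    exact min_eq_right (Nat.le_mul_of_pos_left m r.succ_pos)
  have hAc : #Aᶜ = r * m := by
    rw [card_compl, hA, Fintype.card_fin, Nat.succ_mul, Nat.add_sub_cancel]
  refine ⟨PDG.directedTowards A r, PDG.isValid_directedTowards,
    PDG.not_containsT_directedTowards _, rfl, ?_⟩
  rw [PDG.card_directed_directedTowards, hA, hAc, Nat.add_sub_cancel,
    Nat.mul_div_cancel_left m r.succ_pos, Nat.mul_left_comm, Nat.mul_div_cancel_left _ r.succ_pos]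
end

section
/- If a 2-PDG H⃗ on n vertices with α·C(n,2) undirected edges and β·C(n,2) directed edges contains no copy of T⃗₂ as a subgraph, then α + 2β ≤ 1 + O(1/n). -/
/-!
Forgetting directions gives a graph `G` with `|U| + |D|` edges, and `T⃗₂`-freeness says exactly
that no directed edge lies in a triangle of `G`. By Füredi's argument, if `vw` is a
non-triangular edge then each further neighbour `x` of `w` makes `{v, x}` a non-edge with a
common neighbour; deleting a vertex `v` of minimum degree and inducting shows that `G` has at most
`n` more non-triangular edges than such non-edges. Edges and these non-edges are disjoint pairs,
so `|U| + 2|D| ≤ e(G) + #(non-triangular edges) ≤ C(n, 2) + n`.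
-/

open Finset

section PairGraph

variable {V : Type*} (E : Finset (Finset V))

theorem card_le_choose_two [Fintype V] (hE : ∀ e ∈ E, #e = 2) :
    #E ≤ (Fintype.card V).choose 2 := by
  simpa using card_le_card fun e he => mem_powersetCard.mpr ⟨subset_univ e, hE e he⟩

variable [DecidableEq V] (S : Finset V)

-- No condition `x ∉ p` is needed: the edges have two vertices, so `{x, x} ∉ E`.
def HasCommonNeighborIn (p : Finset V) : Prop :=
  ∃ x ∈ S, ∀ y ∈ p, {x, y} ∈ E

instance : DecidablePred (HasCommonNeighborIn E S) :=
  fun p => inferInstanceAs (Decidable (∃ x ∈ S, ∀ y ∈ p, {x, y} ∈ E))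

def neighborsIn (v : V) : Finset V := {x ∈ S | {v, x} ∈ E}

def nonTriangularEdges : Finset (Finset V) :=
  {e ∈ E | e ⊆ S ∧ ¬ HasCommonNeighborIn E S e}

def distTwoPairs : Finset (Finset V) :=
  {p ∈ S.powersetCard 2 | p ∉ E ∧ HasCommonNeighborIn E S p}

variable {E S}

theorem ne_of_pair_mem (hE : ∀ e ∈ E, #e = 2) {x y : V} (h : {x, y} ∈ E) : x ≠ y := by
  rintro rfl
  simpa using hE _ h

theorem exists_eq_pair_of_mem {e : Finset V} (he : #e = 2) {v : V} (hv : v ∈ e) :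
    ∃ x, x ≠ v ∧ e = {v, x} := by
  obtain ⟨a, b, hab, rfl⟩ := card_eq_two.mp he
  rcases mem_insert.mp hv with rfl | hb
  · exact ⟨b, hab.symm, rfl⟩
  · rw [mem_singleton.mp hb]
    exact ⟨a, hab, pair_comm _ _⟩

theorem nonTriangularEdges_filter_not_mem_subset (v : V) :
    {e ∈ nonTriangularEdges E S | v ∉ e} ⊆ nonTriangularEdges E (S.erase v) := by
  simp only [subset_iff, nonTriangularEdges, mem_filter]
  rintro e ⟨⟨heE, heS, hnot⟩, hv⟩
  refine ⟨heE, fun x hx => mem_erase.mpr ⟨fun h => hv (h ▸ hx), heS hx⟩, ?_⟩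
  rintro ⟨x, hx, hxe⟩
  exact hnot ⟨x, mem_of_mem_erase hx, hxe⟩

theorem distTwoPairs_erase_subset (v : V) :
    distTwoPairs E (S.erase v) ⊆ {p ∈ distTwoPairs E S | v ∉ p} := by
  intro p hp
  simp only [distTwoPairs, mem_filter, mem_powersetCard] at hp ⊢
  obtain ⟨⟨hpS, hp⟩, hpE, x, hx, hxp⟩ := hp
  exact ⟨⟨⟨hpS.trans (erase_subset v S), hp⟩, hpE, x, mem_of_mem_erase hx, hxp⟩,
    fun h => (mem_erase.mp (hpS h)).1 rfl⟩

theorem card_nonTriangularEdges_filter_mem_le_card_neighborsIn (hE : ∀ e ∈ E, #e = 2) (v : V) :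
    #{e ∈ nonTriangularEdges E S | v ∈ e} ≤ #(neighborsIn E S v) := by
  refine (card_le_card fun e he => ?_).trans (card_image_le (f := fun x => ({v, x} : Finset V)))
  simp only [nonTriangularEdges, mem_filter] at he
  obtain ⟨⟨heE, heS, -⟩, hv⟩ := he
  obtain ⟨x, -, rfl⟩ := exists_eq_pair_of_mem (hE _ heE) hv
  exact mem_image.mpr ⟨x, mem_filter.mpr ⟨heS (by simp), heE⟩, rfl⟩

theorem card_neighborsIn_le_card_distTwoPairs_filter_mem_add_one {v w : V}
    (hvw : {v, w} ∈ nonTriangularEdges E S) :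
    #(neighborsIn E S w) ≤ #{p ∈ distTwoPairs E S | v ∈ p} + 1 := by
  simp only [nonTriangularEdges, mem_filter] at hvw
  obtain ⟨hvwE, hvwS, hnot⟩ := hvw
  have hwS : w ∈ S := hvwS (by simp)
  have hvS : v ∈ S := hvwS (by simp)
  suffices #((neighborsIn E S w).erase v) ≤ #{p ∈ distTwoPairs E S | v ∈ p} by
    have := pred_card_le_card_erase (s := neighborsIn E S w) (a := v)
    omega
  refine card_le_card_of_injOn (fun x => {v, x}) (fun x hx => ?_) (fun x hx y hy hxy => ?_)
  · simp only [coe_erase, neighborsIn, coe_filter, Set.mem_sdiff, Set.mem_ofPred_eq,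
      Set.mem_singleton_iff] at hx
    obtain ⟨⟨hxS, hwx⟩, hxv⟩ := hx
    simp only [coe_filter, distTwoPairs, mem_filter, mem_powersetCard, Set.mem_ofPred_eq]
    refine ⟨⟨⟨?_, card_pair (Ne.symm hxv)⟩, fun hvx => hnot ⟨x, hxS, ?_⟩, w, hwS, ?_⟩, by simp⟩
    · simp [insert_subset_iff, hvS, hxS]
    · simp only [mem_insert, mem_singleton, forall_eq_or_imp, forall_eq]
      exact ⟨pair_comm v x ▸ hvx, pair_comm w x ▸ hwx⟩
    · simp only [mem_insert, mem_singleton, forall_eq_or_imp, forall_eq]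
      exact ⟨pair_comm v w ▸ hvwE, hwx⟩
  · simp only [coe_erase, Set.mem_sdiff, Set.mem_singleton_iff] at hx
    have hxy : ({v, x} : Finset V) = {v, y} := hxy
    have : x ∈ ({v, y} : Finset V) := hxy ▸ by simp
    simpa [hx.2] using this

theorem card_nonTriangularEdges_filter_mem_le (hE : ∀ e ∈ E, #e = 2) {v : V}
    (hmin : ∀ w ∈ S, #(neighborsIn E S v) ≤ #(neighborsIn E S w)) :
    #{e ∈ nonTriangularEdges E S | v ∈ e} ≤ #{p ∈ distTwoPairs E S | v ∈ p} + 1 := by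
  obtain h | ⟨e, he⟩ := ({e ∈ nonTriangularEdges E S | v ∈ e}).eq_empty_or_nonempty
  · simp [h]
  obtain ⟨heF, hv⟩ := mem_filter.mp he
  obtain ⟨heE, heS, -⟩ := mem_filter.mp heF
  obtain ⟨w, -, rfl⟩ := exists_eq_pair_of_mem (hE e heE) hv
  calc #{e ∈ nonTriangularEdges E S | v ∈ e}
      ≤ #(neighborsIn E S v) := card_nonTriangularEdges_filter_mem_le_card_neighborsIn hE v
    _ ≤ #(neighborsIn E S w) := hmin w (heS (by simp))
    _ ≤ _ := card_neighborsIn_le_card_distTwoPairs_filter_mem_add_one heF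

-- Füredi's bound `e(G²) ≥ e(G) - n`, with the triangular edges of `G` read as edges of `G²`.
theorem card_nonTriangularEdges_le (hE : ∀ e ∈ E, #e = 2) (S : Finset V) :
    #(nonTriangularEdges E S) ≤ #(distTwoPairs E S) + #S := by
  induction S using Finset.strongInduction with
  | H S ih =>
  obtain rfl | hS := S.eq_empty_or_nonempty
  · refine (card_eq_zero.mpr (filter_eq_empty_iff.mpr fun e he ⟨heS, _⟩ => ?_)).trans_le
      (Nat.zero_le _)
    simpa [subset_empty.mp heS] using hE e he
  obtain ⟨v, hvS, hmin⟩ := S.exists_min_image (fun v => #(neighborsIn E S v)) hS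
  have hfar := card_le_card (nonTriangularEdges_filter_not_mem_subset (E := E) (S := S) v)
  have hih := ih _ (erase_ssubset hvS)
  have hpairs := card_le_card (distTwoPairs_erase_subset (E := E) (S := S) v)
  have hnear := card_nonTriangularEdges_filter_mem_le hE hmin
  have hsplitF := card_filter_add_card_filter_not (s := nonTriangularEdges E S) (v ∈ ·)
  have hsplitP := card_filter_add_card_filter_not (s := distTwoPairs E S) (v ∈ ·)
  have herase := card_erase_of_mem hvS
  have hpos := hS.card_pos
  omega

theorem card_add_card_nonTriangularEdges_le [Fintype V] (hE : ∀ e ∈ E, #e = 2) :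
    #E + #(nonTriangularEdges E univ) ≤ (Fintype.card V).choose 2 + Fintype.card V := by
  have hdisj : Disjoint E (distTwoPairs E univ) :=
    disjoint_right.mpr fun p hp => (mem_filter.mp hp).2.1
  have hsub : E ∪ distTwoPairs E univ ⊆ univ.powersetCard 2 :=
    union_subset (fun e he => mem_powersetCard.mpr ⟨subset_univ e, hE e he⟩) (filter_subset _ _)
  have := card_le_card hsub
  rw [card_union_of_disjoint hdisj, card_powersetCard, card_univ] at this
  have := card_nonTriangularEdges_le hE univ
  rw [card_univ] at this
  omega

end PairGraph

namespace PDG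

variable {V : Type*} [DecidableEq V] {H : PDG V}

def edges (H : PDG V) : Finset (Finset V) := H.undirected ∪ H.directed.image Prod.fst

theorem mem_edges {e : Finset V} : e ∈ H.edges ↔ H.HasEdge e := by
  simp [edges, HasEdge]

theorem IsValid.card_of_mem_edges (hH : H.IsValid 2) {e : Finset V} (he : e ∈ H.edges) :
    #e = 2 := by
  rcases mem_edges.mp he with he | ⟨v, hv⟩
  exacts [hH.1 e he, (hH.2.1 _ hv).1]

theorem IsValid.card_edges (hH : H.IsValid 2) : #H.edges = #H.undirected + #H.directed := by
  rw [edges, card_union_of_disjoint, card_image_of_injOn fun p hp q hq => hH.2.2.2 p hp q hq]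
  exact disjoint_right.mpr fun e he => by
    obtain ⟨p, hp, rfl⟩ := mem_image.mp he
    exact hH.2.2.1 p hp

theorem IsValid.not_hasCommonNeighborIn (hH : H.IsValid 2) (hfree : ¬ H.ContainsT 2)
    (S : Finset V) {p : Finset V × V} (hp : p ∈ H.directed) :
    ¬ HasCommonNeighborIn H.edges S p.1 := by
  rintro ⟨x, -, hx⟩
  obtain ⟨e, w⟩ := p
  obtain ⟨hcard, hw⟩ : #e = 2 ∧ w ∈ e := hH.2.1 _ hp
  obtain ⟨a, haw, rfl⟩ := exists_eq_pair_of_mem hcard hw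
  have hxa := hx a (by simp)
  have hxw := hx w (by simp)
  have hne {y z : V} : {y, z} ∈ H.edges → y ≠ z :=
    ne_of_pair_mem fun _ => hH.card_of_mem_edges
  refine hfree ⟨∅, a, x, w, rfl, by simp, by simp, by simp, (hne hxa).symm, haw,
    hne hxw, ?_, ?_, ?_⟩
  · simpa [pair_comm] using mem_edges.mp hxa
  · simpa [pair_comm] using hp
  · simpa using mem_edges.mp hxw

theorem IsValid.card_undirected_add_two_mul_card_directed_le [Fintype V] (hH : H.IsValid 2)
    (hfree : ¬ H.ContainsT 2) :
    #H.undirected + 2 * #H.directed ≤ (Fintype.card V).choose 2 + Fintype.card V := by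
  have hdirected : H.directed.image Prod.fst ⊆ nonTriangularEdges H.edges univ := by
    intro e he
    obtain ⟨p, hp, rfl⟩ := mem_image.mp he
    exact mem_filter.mpr ⟨mem_union_right _ (mem_image_of_mem _ hp), subset_univ _,
      hH.not_hasCommonNeighborIn hfree univ hp⟩
  have := card_le_card hdirected
  rw [card_image_of_injOn fun p hp q hq => hH.2.2.2 p hp q hq] at this
  have := card_add_card_nonTriangularEdges_le fun _ => hH.card_of_mem_edges
  have := hH.card_edges
  omega

theorem IsValid.card_undirected_add_two_mul_card_directed_le_two_mul_choose_two [Fintype V]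
    (hH : H.IsValid 2) :
    #H.undirected + 2 * #H.directed ≤ 2 * (Fintype.card V).choose 2 := by
  have := card_le_choose_two _ fun _ => hH.card_of_mem_edges
  have := hH.card_edges
  omega

end PDG

theorem le_one_add_four_div_mul_choose_two {x : ℝ} {n : ℕ} (h₁ : x ≤ n.choose 2 + n)
    (h₂ : x ≤ 2 * n.choose 2) : x ≤ (1 + 4 / n) * n.choose 2 := by
  rcases lt_or_ge n 2 with hn | hn
  · simpa [Nat.choose_eq_zero_of_lt hn] using h₂
  have hn : (2 : ℝ) ≤ n := by exact_mod_cast hn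
  rw [Nat.cast_choose_two] at h₁ ⊢
  calc x ≤ n * (n - 1) / 2 + n := h₁
    _ ≤ n * (n - 1) / 2 + 2 * (n - 1) := by linarith
    _ = (1 + 4 / n) * (n * (n - 1) / 2) := by field_simp; ring

/-- If a 2-PDG on `n` vertices with `α·C(n,2)` undirected and `β·C(n,2)` directed edges is
`T⃗₂`-free, then `α + 2β ≤ 1 + O(1/n)`. -/
theorem stmt_14 :
    ∃ C : ℝ, 0 ≤ C ∧ ∀ (n : ℕ) (V : Type) [Fintype V] [DecidableEq V],
      Fintype.card V = n → ∀ H : PDG V, H.IsValid 2 → ¬ H.ContainsT 2 →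
        (H.undirected.card : ℝ) + 2 * (H.directed.card : ℝ)
          ≤ (1 + C / (n : ℝ)) * (n.choose 2) := by
  refine ⟨4, by norm_num, ?_⟩
  rintro n V _ _ rfl H hH hfree
  apply le_one_add_four_div_mul_choose_two
  · exact_mod_cast hH.card_undirected_add_two_mul_card_directed_le hfree
  · exact_mod_cast hH.card_undirected_add_two_mul_card_directed_le_two_mul_choose_two
end
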